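/- For every positive integer s, Klee's function Φ_s is multiplicative in n: for all coprime positive integers m and n, Φ_s(m·n) = Φ_s(m) · Φ_s(n). -/

import Mathlib

/-!
`(x, n)_s = 1` exactly when no prime `p` has `p ^ s` dividing both `x` and `n`. For coprime `m`
and `n` a prime power divides `m * n` iff it divides `m` or `n`, so the condition for `m * n`
is the conjunction of the conditions for `m` and for `n`. Each condition depends only on the
residue of `x` modulo its own modulus, and the Chinese remainder theorem turns the count below
`m * n` into the product of the counts below `m` and below `n`.
-/

/-- The generalized gcd of a nonnegative integer `n` at level `s`: the largest
`s`-th power `l ^ s` (with `l ≥ 1`) dividing `n`.  Applying it to `n = gcd(a, b)`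
gives the generalized gcd `(a, b)_s` of the paper. -/
def sPowGcd (s n : ℕ) : ℕ := (Nat.findGreatest (fun l => l ^ s ∣ n) n) ^ s

/-- Klee's function `Φ_s(n)`: the number of `1 ≤ m ≤ n` with `(m, n)_s = 1`. -/
def klee (s n : ℕ) : ℕ :=
  ((Finset.Icc 1 n).filter (fun m => sPowGcd s (Nat.gcd m n) = 1)).card

open Finset Function

theorem Nat.count_and_eq_mul_of_coprime {P Q : ℕ → Prop} [DecidablePred P] [DecidablePred Q]
    {m n : ℕ} (hmn : m.Coprime n) (hP : Periodic P m) (hQ : Periodic Q n) :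
    Nat.count (fun x => P x ∧ Q x) (m * n) = Nat.count P m * Nat.count Q n := by
  rcases Nat.eq_zero_or_pos m with rfl | hm
  · simp
  rcases Nat.eq_zero_or_pos n with rfl | hn
  · simp
  simp only [Nat.count_eq_card_filter_range, ← card_product, ← filter_product]
  refine card_nbij' (fun x => (x % m, x % n)) (fun y => Nat.chineseRemainder hmn y.1 y.2)
    ?_ ?_ ?_ ?_
  · intro x hx
    simp only [coe_filter, mem_range, Set.mem_ofPred_eq, mem_product] at hx ⊢
    rw [hP.map_mod_nat, hQ.map_mod_nat]
    exact ⟨⟨Nat.mod_lt _ hm, Nat.mod_lt _ hn⟩, hx.2⟩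
  · rintro ⟨a, b⟩ hab
    simp only [coe_filter, mem_range, Set.mem_ofPred_eq, mem_product] at hab ⊢
    obtain ⟨hca, hcb⟩ := (Nat.chineseRemainder hmn a b).2
    refine ⟨Nat.chineseRemainder_lt_mul hmn a b hm.ne' hn.ne', ?_, ?_⟩
    · rw [← hP.map_mod_nat, hca, hP.map_mod_nat]
      exact hab.2.1
    · rw [← hQ.map_mod_nat, hcb, hQ.map_mod_nat]
      exact hab.2.2
  · intro x hx
    simp only [coe_filter, mem_range, Set.mem_ofPred_eq] at hx
    exact (Nat.chineseRemainder_modEq_unique hmn (Nat.mod_modEq x m).symm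
      (Nat.mod_modEq x n).symm).symm.eq_of_lt_of_lt
      (Nat.chineseRemainder_lt_mul hmn _ _ hm.ne' hn.ne') hx.1
  · rintro ⟨a, b⟩ hab
    simp only [coe_filter, mem_range, Set.mem_ofPred_eq, mem_product] at hab
    obtain ⟨hca, hcb⟩ := (Nat.chineseRemainder hmn a b).2
    exact Prod.ext (Eq.trans hca (Nat.mod_eq_of_lt hab.1.1))
      (Eq.trans hcb (Nat.mod_eq_of_lt hab.1.2))

theorem periodic_sPowGcd_gcd_eq_one (s n : ℕ) :
    Periodic (fun x => sPowGcd s (x.gcd n) = 1) n :=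
  fun x => by simp only [Nat.gcd_add_self_left]

theorem klee_eq_count (s n : ℕ) : klee s n = Nat.count (fun x => sPowGcd s (x.gcd n) = 1) n := by
  rw [klee, ← Ico_add_one_right_eq_Icc, add_comm]
  exact Nat.filter_Ico_card_eq_of_periodic 1 n _ (periodic_sPowGcd_gcd_eq_one s n)

theorem sPowGcd_eq_one_iff {s g : ℕ} (hs : s ≠ 0) (hg : g ≠ 0) :
    sPowGcd s g = 1 ↔ ∀ l, 1 < l → ¬ l ^ s ∣ g := by
  have hle {l : ℕ} (hl : l ^ s ∣ g) : l ≤ g :=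
    (Nat.le_self_pow hs l).trans (Nat.le_of_dvd (Nat.pos_of_ne_zero hg) hl)
  rw [sPowGcd, pow_eq_one_iff, or_iff_left hs, Nat.findGreatest_eq_iff]
  simp only [one_pow, one_dvd, implies_true, true_and]
  exact ⟨fun h l hl hdvd => h.2 hl (hle hdvd) hdvd,
    fun h => ⟨Nat.one_le_iff_ne_zero.2 hg, fun l hl _ => h l hl⟩⟩

theorem sPowGcd_eq_one_iff_prime {s g : ℕ} (hs : s ≠ 0) (hg : g ≠ 0) :
    sPowGcd s g = 1 ↔ ∀ p, p.Prime → ¬ p ^ s ∣ g := by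
  rw [sPowGcd_eq_one_iff hs hg]
  refine ⟨fun h p hp => h p hp.one_lt, fun h l hl hdvd => ?_⟩
  exact h _ (Nat.minFac_prime hl.ne') ((pow_dvd_pow_of_dvd (Nat.minFac_dvd l) s).trans hdvd)

theorem sPowGcd_gcd_eq_one_iff {s n : ℕ} (hs : s ≠ 0) (hn : n ≠ 0) (x : ℕ) :
    sPowGcd s (x.gcd n) = 1 ↔ ∀ p, p.Prime → p ^ s ∣ x → ¬ p ^ s ∣ n := by
  simp only [sPowGcd_eq_one_iff_prime hs (Nat.gcd_ne_zero_right hn), Nat.dvd_gcd_iff, not_and]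

theorem sPowGcd_gcd_mul_eq_one_iff {s m n : ℕ} (hs : s ≠ 0) (hm : m ≠ 0) (hn : n ≠ 0)
    (hmn : m.Coprime n) (x : ℕ) :
    sPowGcd s (x.gcd (m * n)) = 1 ↔ sPowGcd s (x.gcd m) = 1 ∧ sPowGcd s (x.gcd n) = 1 := by
  simp only [sPowGcd_gcd_eq_one_iff hs (mul_ne_zero hm hn), sPowGcd_gcd_eq_one_iff hs hm,
    sPowGcd_gcd_eq_one_iff hs hn, ← forall_and, ← not_or]
  exact forall_congr' fun p => forall_congr' fun hp => by
    rw [hmn.isPrimePow_dvd_mul (hp.isPrimePow.pow hs)]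

theorem stmt_10 (s : ℕ) (hs : 0 < s) :
    ∀ m n : ℕ, 0 < m → 0 < n → Nat.Coprime m n → klee s (m * n) = klee s m * klee s n := by
  intro m n hm hn hmn
  simp only [klee_eq_count, sPowGcd_gcd_mul_eq_one_iff hs.ne' hm.ne' hn.ne' hmn]
  exact Nat.count_and_eq_mul_of_coprime hmn (periodic_sPowGcd_gcd_eq_one s m)
    (periodic_sPowGcd_gcd_eq_one s n)
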